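/- Let μ and η be discrete growth rates such that μ_{n+1}/μ_n ≤ θ and η_{n+1}/η_n ≤ θ for all n ≥ 0 and some θ ≥ 1. Let {A_n}_{n≥1} be a sequence of invertible bounded linear operators on a Banach space X and {‖·‖_k}_{k≥1} a sequence of norms such that for some K, a > 0: ‖Φ_A(m,k)x‖_m ≤ K(μ_m/μ_k)^a ‖x‖_k for m ≥ k and ‖Φ_A(m,k)x‖_m ≤ K(μ_k/μ_m)^a ‖x‖_k for m ≤ k. Then the system x_{n+1}=A_n x_n admits a μ-dichotomy with respect to the norms {‖·‖_k} if and only if the rescaled system y_{n+1}=Q_n^{μ,η} y_n admits an η-dichotomy with respect to the rescaled norms {‖·‖_k^η}. -/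
import Mathlib


noncomputable section

open Filter Metric Set Topology

variable {X : Type*} [NormedAddCommGroup X] [NormedSpace ℝ X]

/-- A discrete growth rate: strictly increasing, `μ 0 = 1`, `μ n → ∞`. -/
def IsGrowthRate (μ : ℕ → ℝ) : Prop :=
  StrictMono μ ∧ μ 0 = 1 ∧ Filter.Tendsto μ Filter.atTop Filter.atTop

/-- The piecewise linear extension `μ̃` of a growth rate. -/
def tildeExt (μ : ℕ → ℝ) (t : ℝ) : ℝ :=
  μ ⌊t⌋₊ + (t - (⌊t⌋₊ : ℝ)) * (μ (⌊t⌋₊ + 1) - μ ⌊t⌋₊)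

/-- `⌊μ̃⁻¹ t⌋`, i.e. the largest `n` with `μ n ≤ t` (for `t ≥ 1`). -/
def floorInvTilde (μ : ℕ → ℝ) (t : ℝ) : ℕ := sSup {n : ℕ | μ n ≤ t}

/-- `⌊μ̃⁻¹ (η (k-1))⌋ + 1`. -/
def idxQ (μ η : ℕ → ℝ) (k : ℕ) : ℕ := floorInvTilde μ (η (k - 1)) + 1

def evolFwd (A : ℕ → X →L[ℝ] X) (k : ℕ) : ℕ → X →L[ℝ] X
  | 0 => ContinuousLinearMap.id ℝ X
  | n + 1 => (A (k + n)).comp (evolFwd A k n)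

/-- The evolution family `Φ_A(m,k) = A_{m-1} ∘ ⋯ ∘ A_k` for `m ≥ k`. -/
def evol (A : ℕ → X →L[ℝ] X) (m k : ℕ) : X →L[ℝ] X := evolFwd A k (m - k)

def evolFwdE (A : ℕ → X ≃L[ℝ] X) (k : ℕ) : ℕ → X ≃L[ℝ] X
  | 0 => ContinuousLinearEquiv.refl ℝ X
  | n + 1 => (evolFwdE A k n).trans (A (k + n))

/-- Two-sided evolution family of a sequence of invertible operators:
`Φ_A(m,k) = A_{m-1}⋯A_k` for `m > k`, `Id` for `m = k`, `A_m⁻¹⋯A_{k-1}⁻¹` for `m < k`. -/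
def evolEquiv (A : ℕ → X ≃L[ℝ] X) (m k : ℕ) : X ≃L[ℝ] X :=
  if k ≤ m then evolFwdE A k (m - k) else (evolFwdE A m (k - m)).symm

def evolE (A : ℕ → X ≃L[ℝ] X) (m k : ℕ) : X →L[ℝ] X := (evolEquiv A m k : X →L[ℝ] X)

/-- The time-rescaled sequence `Q_n^{μ,η} = Φ_A(⌊μ̃⁻¹(η n)⌋+1, ⌊μ̃⁻¹(η (n-1))⌋+1)`. -/
def Qseq (A : ℕ → X →L[ℝ] X) (μ η : ℕ → ℝ) (n : ℕ) : X →L[ℝ] X :=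
  evol A (idxQ μ η (n + 1)) (idxQ μ η n)

def QseqE (A : ℕ → X ≃L[ℝ] X) (μ η : ℕ → ℝ) (n : ℕ) : X ≃L[ℝ] X :=
  evolEquiv A (idxQ μ η (n + 1)) (idxQ μ η n)

/-- A sequence of norms on `X`. -/
def IsNormFamily (Nrm : ℕ → X → ℝ) : Prop :=
  ∀ k, (∀ x y : X, Nrm k (x + y) ≤ Nrm k x + Nrm k y) ∧
    (∀ (c : ℝ) (x : X), Nrm k (c • x) = |c| * Nrm k x) ∧
    (∀ x : X, Nrm k x = 0 → x = 0)

/-- Each norm in the family is equivalent to the ambient norm. -/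
def NormsEquivalent (Nrm : ℕ → X → ℝ) : Prop :=
  ∀ k, ∃ α β : ℝ, 0 < α ∧ 0 < β ∧ ∀ x : X, α * ‖x‖ ≤ Nrm k x ∧ Nrm k x ≤ β * ‖x‖

/-- (od1)–(od2): a sequence of projections compatible with the dynamics, such that the
restriction of `A k` to `Ker P k` is an isomorphism onto `Ker P (k+1)`. -/
def ProjectionsCompat (A P : ℕ → X →L[ℝ] X) : Prop :=
  (∀ k, 1 ≤ k → (P k).comp (P k) = P k) ∧
  (∀ k, 1 ≤ k → (A k).comp (P k) = (P (k + 1)).comp (A k)) ∧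
  (∀ k, 1 ≤ k → Set.BijOn (⇑(A k)) {x : X | P k x = 0} {x : X | P (k + 1) x = 0})

/-- μ-dichotomy with respect to a sequence of norms, relative to given projections.
For `m ≤ k`, `Φ_A(m,k)(Id - P_k)x` denotes the unique `z ∈ Ker P_m` with
`Φ_A(k,m) z = (Id - P_k) x`. -/
def MuDichotomyNormsWith (μ : ℕ → ℝ) (A P : ℕ → X →L[ℝ] X) (Nrm : ℕ → X → ℝ) : Prop :=
  ProjectionsCompat A P ∧
  ∃ N ν : ℝ, 1 ≤ N ∧ 0 < ν ∧
    (∀ k m : ℕ, 1 ≤ k → k ≤ m → ∀ x : X,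
      Nrm m (evol A m k (P k x)) ≤ N * (μ m / μ k) ^ (-ν) * Nrm k x) ∧
    (∀ m k : ℕ, 1 ≤ m → m ≤ k → ∀ x z : X, P m z = 0 → evol A k m z = x - P k x →
      Nrm m z ≤ N * (μ k / μ m) ^ (-ν) * Nrm k x)

/-- Ordinary dichotomy with respect to a sequence of norms, relative to given projections. -/
def OrdinaryDichotomyNormsWith (A P : ℕ → X →L[ℝ] X) (Nrm : ℕ → X → ℝ) : Prop :=
  ProjectionsCompat A P ∧
  ∃ K : ℝ, 1 ≤ K ∧
    (∀ k m : ℕ, 1 ≤ k → k ≤ m → ∀ x : X, Nrm m (evol A m k (P k x)) ≤ K * Nrm k x) ∧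
    (∀ m k : ℕ, 1 ≤ m → m ≤ k → ∀ x z : X, P m z = 0 → evol A k m z = x - P k x →
      Nrm m z ≤ K * Nrm k x)

/-- μ-dichotomy (with respect to a sequence of norms) of a system of invertible operators. -/
def MuDichotomyNormsE (μ : ℕ → ℝ) (A : ℕ → X ≃L[ℝ] X) (Nrm : ℕ → X → ℝ) : Prop :=
  ∃ P : ℕ → X →L[ℝ] X,
    (∀ k, 1 ≤ k → (P k).comp (P k) = P k) ∧
    (∀ k, 1 ≤ k → ((A k : X →L[ℝ] X)).comp (P k) = (P (k + 1)).comp ((A k : X →L[ℝ] X))) ∧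
    (∀ k, 1 ≤ k → Set.BijOn (⇑(A k)) {x : X | P k x = 0} {x : X | P (k + 1) x = 0}) ∧
    ∃ N ν : ℝ, 1 ≤ N ∧ 0 < ν ∧
      (∀ k m : ℕ, 1 ≤ k → k ≤ m → ∀ x : X,
        Nrm m (evolE A m k (P k x)) ≤ N * (μ m / μ k) ^ (-ν) * Nrm k x) ∧
      (∀ m k : ℕ, 1 ≤ m → m ≤ k → ∀ x : X,
        Nrm m (evolE A m k (x - P k x)) ≤ N * (μ k / μ m) ^ (-ν) * Nrm k x)

/-- μ-dichotomy with respect to the original norm. -/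
def MuDichotomy (μ : ℕ → ℝ) (B : ℕ → X →L[ℝ] X) : Prop :=
  ∃ P : ℕ → X →L[ℝ] X, MuDichotomyNormsWith μ B P fun _ x => ‖x‖

/-- The scaled system `Ã_n = (μ_{n+1}/μ_n)^{-λ} A_n`. -/
def scaledSys (μ : ℕ → ℝ) (A : ℕ → X ≃L[ℝ] X) (l : ℝ) (n : ℕ) : X →L[ℝ] X :=
  ((μ (n + 1) / μ n) ^ (-l)) • (A n : X →L[ℝ] X)

/-- The generalized dichotomy spectrum `Σ_{μD,𝔸}`. -/
def muSpectrum (μ : ℕ → ℝ) (A : ℕ → X ≃L[ℝ] X) : Set ℝ :=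
  {l : ℝ | ¬ MuDichotomy μ (scaledSys μ A l)}

/-- The exponential growth rate `n ↦ e^n`. -/
def expRate : ℕ → ℝ := fun n => Real.exp n

/-- `Σ_{ED,ℚ}`: the Sacker–Sell spectrum of the time-rescaled system. -/
def expSpectrumQ (μ : ℕ → ℝ) (A : ℕ → X ≃L[ℝ] X) : Set ℝ :=
  {l : ℝ | ¬ MuDichotomy expRate fun n => Real.exp (-l) • (QseqE A μ expRate n : X →L[ℝ] X)}

/-- `f` is a homeomorphism. -/
def IsHomeoOf {Y : Type*} [TopologicalSpace Y] (f : Y → Y) : Prop :=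
  ∃ h : Y ≃ₜ Y, ∀ x, h x = f x

/-- The perturbed maps `x ↦ A_n x + g_n x`. -/
def pert (A : ℕ → X ≃L[ℝ] X) (g : ℕ → X → X) (n : ℕ) : X → X := fun x => A n x + g n x

def nlFwd (F : ℕ → X → X) (n : ℕ) : ℕ → X → X
  | 0 => id
  | j + 1 => F (n + j) ∘ nlFwd F n j

/-- Nonlinear evolution `𝒢(m,n) = (A_{m-1}+g_{m-1})∘⋯∘(A_n+g_n)` for `m ≥ n`. -/
def nlEvol (A : ℕ → X ≃L[ℝ] X) (g : ℕ → X → X) (m n : ℕ) : X → X := nlFwd (pert A g) n (m - n)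

def nlBwd (F : ℕ → X → X) (m : ℕ) : ℕ → X → X
  | 0 => id
  | j + 1 => nlBwd F m j ∘ Function.invFun (F (m + j))

/-- Nonlinear evolution `𝒢(m,n) = (A_m+g_m)⁻¹∘⋯∘(A_{n-1}+g_{n-1})⁻¹` for `m ≤ n`. -/
def nlEvolBwd (A : ℕ → X ≃L[ℝ] X) (g : ℕ → X → X) (m n : ℕ) : X → X :=
  nlBwd (pert A g) m (n - m)

/-- The rescaled nonlinearities `f_n`. -/
def fSeq (A : ℕ → X ≃L[ℝ] X) (g : ℕ → X → X) (μ : ℕ → ℝ) (n : ℕ) (x : X) : X :=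
  ∑ j ∈ Finset.Icc (floorInvTilde μ (expRate (n - 1)) + 1) (floorInvTilde μ (expRate n)),
    evolE A (floorInvTilde μ (expRate n) + 1) (j + 1)
      (g j (nlEvol A g j (floorInvTilde μ (expRate (n - 1)) + 1) x))

/-- The class `𝒪_μ^k`, with constant `M`. -/
def InOmegaMu (μ : ℕ → ℝ) (k : ℕ) (f : ℕ → X → X) (M : ℝ) : Prop :=
  (∀ n, ContDiff ℝ (k : ℕ∞) (f n)) ∧ (∀ n, f n 0 = 0) ∧ (∀ n, fderiv ℝ (f n) 0 = 0) ∧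
  ∀ n, 1 ≤ n → ∀ x : X, ∀ j : ℕ, j ≤ k →
    ‖iteratedFDeriv ℝ j (f n) x‖ ≤ M * (μ (n + 1) - μ n) / μ n

section Aux

lemma evolFwdE_add_apply (B : ℕ → X ≃L[ℝ] X) (r j : ℕ) :
    ∀ (i : ℕ) (x : X), evolFwdE B r (j + i) x = evolFwdE B (r + j) i (evolFwdE B r j x)
  | 0, x => by simp [evolFwdE]
  | i + 1, x => by
    show B (r + (j + i)) (evolFwdE B r (j + i) x)
        = B (r + j + i) (evolFwdE B (r + j) i (evolFwdE B r j x))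
    rw [evolFwdE_add_apply B r j i x, Nat.add_assoc]

lemma e_self_apply (B : ℕ → X ≃L[ℝ] X) (p : ℕ) (x : X) : evolEquiv B p p x = x := by
  simp [evolEquiv, evolFwdE]

lemma coc_le_apply (B : ℕ → X ≃L[ℝ] X) {p q r : ℕ} (hrq : r ≤ q) (hqp : q ≤ p) (x : X) :
    evolEquiv B p q (evolEquiv B q r x) = evolEquiv B p r x := by
  simp only [evolEquiv, if_pos hqp, if_pos hrq, if_pos (hrq.trans hqp)]
  have h1 : p - r = (q - r) + (p - q) := by omega
  have h2 : r + (q - r) = q := by omega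
  rw [h1, evolFwdE_add_apply, h2]

lemma e_base0 (B : ℕ → X ≃L[ℝ] X) (p q : ℕ) (x : X) :
    evolEquiv B p q x = evolEquiv B p 0 ((evolEquiv B q 0).symm x) := by
  rcases le_or_gt q p with h | h
  · have h2 := coc_le_apply B (Nat.zero_le q) h ((evolEquiv B q 0).symm x)
    rwa [ContinuousLinearEquiv.apply_symm_apply] at h2
  · apply (evolEquiv B q p).injective
    have hqp : evolEquiv B q p (evolEquiv B p q x) = x := by
      simp only [evolEquiv, if_pos h.le, if_neg (not_le.mpr h)]
      exact (evolFwdE B p (q - p)).apply_symm_apply x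
    rw [hqp, coc_le_apply B (Nat.zero_le p) h.le, ContinuousLinearEquiv.apply_symm_apply]

lemma coc (B : ℕ → X ≃L[ℝ] X) (p q r : ℕ) (x : X) :
    evolEquiv B p q (evolEquiv B q r x) = evolEquiv B p r x := by
  rw [e_base0 B q r x, e_base0 B p q, ContinuousLinearEquiv.symm_apply_apply, ← e_base0 B p r]

lemma e_succ_apply (B : ℕ → X ≃L[ℝ] X) (n : ℕ) (x : X) :
    evolEquiv B (n + 1) n x = B n x := by
  simp only [evolEquiv, if_pos (Nat.le_succ n)]
  have h : n + 1 - n = 1 := by omega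
  rw [h]
  show B (n + 0) (evolFwdE B n 0 x) = B n x
  simp [evolFwdE]

lemma e_base (B : ℕ → X ≃L[ℝ] X) (p q b : ℕ) (x : X) :
    evolEquiv B p q x = evolEquiv B p b ((evolEquiv B q b).symm x) := by
  conv_lhs => rw [← (evolEquiv B q b).apply_symm_apply x]
  rw [coc]

lemma evol_comm_proj (B : ℕ → X ≃L[ℝ] X) (R : ℕ → X →L[ℝ] X)
    (h : ∀ k, 1 ≤ k → ∀ x : X, B k (R k x) = R (k + 1) (B k x)) :
    ∀ k m, 1 ≤ k → k ≤ m → ∀ x : X,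
      evolEquiv B m k (R k x) = R m (evolEquiv B m k x) := by
  intro k m hk hkm
  induction m, hkm using Nat.le_induction with
  | base => intro x; rw [e_self_apply, e_self_apply]
  | succ m hkm ih =>
    intro x
    rw [← coc B (m + 1) m k (R k x), ih x, e_succ_apply, h m (hk.trans hkm),
      ← e_succ_apply B m (evolEquiv B m k x), coc]

lemma evolQ_zero (A : ℕ → X ≃L[ℝ] X) (μ η : ℕ → ℝ) :
    ∀ (n : ℕ) (x : X), evolEquiv (QseqE A μ η) n 0 x
      = evolEquiv A (idxQ μ η n) (idxQ μ η 0) x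
  | 0, x => by rw [e_self_apply, e_self_apply]
  | n + 1, x => by
    rw [← coc (QseqE A μ η) (n + 1) n 0 x, e_succ_apply, evolQ_zero A μ η n x]
    exact coc A (idxQ μ η (n + 1)) (idxQ μ η n) (idxQ μ η 0) x

lemma evolQ_eq (A : ℕ → X ≃L[ℝ] X) (μ η : ℕ → ℝ) (m k : ℕ) (x : X) :
    evolEquiv (QseqE A μ η) m k x = evolEquiv A (idxQ μ η m) (idxQ μ η k) x := by
  rw [e_base (QseqE A μ η) m k 0 x, evolQ_zero]
  have hsymm : (evolEquiv (QseqE A μ η) k 0).symm x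
      = (evolEquiv A (idxQ μ η k) (idxQ μ η 0)).symm x := by
    apply (evolEquiv (QseqE A μ η) k 0).injective
    rw [ContinuousLinearEquiv.apply_symm_apply, evolQ_zero,
      ContinuousLinearEquiv.apply_symm_apply]
  rw [hsymm]
  exact (e_base A (idxQ μ η m) (idxQ μ η k) (idxQ μ η 0) x).symm

lemma evolE_apply (B : ℕ → X ≃L[ℝ] X) (m k : ℕ) (x : X) :
    evolE B m k x = evolEquiv B m k x := rfl

lemma nrm_nonneg {Nrm : ℕ → X → ℝ} (h : IsNormFamily Nrm) (k : ℕ) (x : X) :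
    0 ≤ Nrm k x := by
  obtain ⟨tri, hom, _⟩ := h k
  have h0 : Nrm k 0 = 0 := by simpa using hom 0 0
  have hneg : Nrm k (-x) = Nrm k x := by simpa using hom (-1) x
  have h2 := tri x (-x)
  rw [show x + -x = (0 : X) by simp, h0, hneg] at h2
  linarith

lemma bijOn_of_comm (B : X ≃L[ℝ] X) (R R' : X →L[ℝ] X)
    (h : ∀ x : X, B (R x) = R' (B x)) :
    Set.BijOn (⇑B) {x : X | R x = 0} {x : X | R' x = 0} := by
  refine ⟨fun x hx => ?_, B.injective.injOn, fun y hy => ?_⟩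
  · show R' (B x) = 0
    rw [← h x, show R x = 0 from hx]
    simp
  · refine ⟨B.symm y, ?_, B.apply_symm_apply y⟩
    show R (B.symm y) = 0
    have h1 : B (R (B.symm y)) = 0 := by
      rw [h, B.apply_symm_apply]; exact hy
    exact (B.map_eq_zero_iff).mp h1

lemma rpow_ratio_bound {u v Θ ν : ℝ} (hu : 0 < u) (hv : 0 < v) (hΘ : 0 < Θ)
    (h : v ≤ Θ * u) (hν : 0 ≤ ν) : u ^ (-ν) ≤ Θ ^ ν * v ^ (-ν) := by
  have hupos : (0 : ℝ) < u ^ ν := Real.rpow_pos_of_pos hu ν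
  have hvpos : (0 : ℝ) < v ^ ν := Real.rpow_pos_of_pos hv ν
  have key : v ^ ν ≤ Θ ^ ν * u ^ ν := by
    calc v ^ ν ≤ (Θ * u) ^ ν := Real.rpow_le_rpow hv.le h hν
      _ = Θ ^ ν * u ^ ν := Real.mul_rpow hΘ.le hu.le
  rw [Real.rpow_neg hu.le, Real.rpow_neg hv.le, inv_eq_one_div, inv_eq_one_div,
    mul_one_div, div_le_div_iff₀ hupos hvpos, one_mul]
  exact key

lemma div_cross {x y z w c1 c2 : ℝ} (hz : 0 < z) (hw : 0 < w)
    (hx : 0 ≤ x) (h1 : x ≤ c1 * y) (h2 : w ≤ c2 * z) :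
    x / z ≤ (c1 * c2) * (y / w) := by
  have hrw : c1 * c2 * (y / w) = (c1 * c2 * y) / w := by ring
  rw [hrw, div_le_div_iff₀ hz hw]
  calc x * w ≤ (c1 * y) * (c2 * z) := mul_le_mul h1 h2 hw.le (hx.trans h1)
    _ = c1 * c2 * y * z := by ring

lemma mul_chain4 {T T' U U' V V' c : ℝ} (hT : T ≤ T') (hU : U ≤ U') (hV : V ≤ V')
    (h0U : 0 ≤ U) (h0V : 0 ≤ V) (h0c : 0 ≤ c) (h0T' : 0 ≤ T') (h0U' : 0 ≤ U')
    (h0V' : 0 ≤ V') :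
    T * (U * (V * c)) ≤ T' * (U' * (V' * c)) :=
  mul_le_mul hT
    (mul_le_mul hU (mul_le_mul hV le_rfl h0c h0V') (mul_nonneg h0V h0c) h0U')
    (mul_nonneg h0U (mul_nonneg h0V h0c)) h0T'

lemma growth_one_le {μ : ℕ → ℝ} (hμ : IsGrowthRate μ) (n : ℕ) : 1 ≤ μ n := by
  rw [← hμ.2.1]; exact hμ.1.monotone (Nat.zero_le n)

lemma growth_pos {μ : ℕ → ℝ} (hμ : IsGrowthRate μ) (n : ℕ) : 0 < μ n :=
  lt_of_lt_of_le one_pos (growth_one_le hμ n)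

lemma floorSet_bddAbove {μ : ℕ → ℝ} (hμ : IsGrowthRate μ) (t : ℝ) :
    BddAbove {n : ℕ | μ n ≤ t} := by
  rcases Filter.eventually_atTop.mp (hμ.2.2.eventually_ge_atTop (t + 1)) with ⟨N, hN⟩
  refine ⟨N, fun n hn => ?_⟩
  by_contra hc
  push_neg at hc
  have := hN n hc.le
  have hn' : μ n ≤ t := hn
  linarith

lemma floorInv_le {μ : ℕ → ℝ} (hμ : IsGrowthRate μ) {t : ℝ} (ht : 1 ≤ t) :
    μ (floorInvTilde μ t) ≤ t := by
  have h0 : (0 : ℕ) ∈ {n : ℕ | μ n ≤ t} := by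
    simp only [Set.mem_setOf_eq, hμ.2.1]; exact ht
  exact Nat.sSup_mem ⟨0, h0⟩ (floorSet_bddAbove hμ t)

lemma lt_floorInv_succ {μ : ℕ → ℝ} (hμ : IsGrowthRate μ) {t : ℝ} (ht : 1 ≤ t) :
    t < μ (floorInvTilde μ t + 1) := by
  by_contra h
  push_neg at h
  have : floorInvTilde μ t + 1 ≤ floorInvTilde μ t :=
    le_csSup (floorSet_bddAbove hμ t) h
  omega

lemma floorInv_mono {μ : ℕ → ℝ} (hμ : IsGrowthRate μ) {s t : ℝ} (hs : 1 ≤ s)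
    (hst : s ≤ t) : floorInvTilde μ s ≤ floorInvTilde μ t :=
  le_csSup (floorSet_bddAbove hμ t) ((floorInv_le hμ hs).trans hst)

lemma floorInv_one {μ : ℕ → ℝ} (hμ : IsGrowthRate μ) : floorInvTilde μ 1 = 0 := by
  by_contra h
  have hpos : 0 < floorInvTilde μ 1 := Nat.pos_of_ne_zero h
  have hlt := hμ.1 hpos
  rw [hμ.2.1] at hlt
  have hmem := floorInv_le hμ le_rfl
  linarith

end Aux
/-- the equivalence in Theorem 2.5 (`newthm`). -/
theorem mu_dichotomy_iff_rescaled_eta_dichotomy [CompleteSpace X]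
    (μ η : ℕ → ℝ) (hμ : IsGrowthRate μ) (hη : IsGrowthRate η)
    (θ : ℝ) (hθ : 1 ≤ θ) (hμr : ∀ n, μ (n + 1) / μ n ≤ θ) (hηr : ∀ n, η (n + 1) / η n ≤ θ)
    (A : ℕ → X ≃L[ℝ] X) (Nrm : ℕ → X → ℝ) (hNrm : IsNormFamily Nrm)
    (K a : ℝ) (hK : 0 < K) (ha : 0 < a)
    (hfwd : ∀ k m : ℕ, 1 ≤ k → k ≤ m → ∀ x : X,
      Nrm m (evolE A m k x) ≤ K * (μ m / μ k) ^ a * Nrm k x)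
    (hbwd : ∀ m k : ℕ, 1 ≤ m → m ≤ k → ∀ x : X,
      Nrm m (evolE A m k x) ≤ K * (μ k / μ m) ^ a * Nrm k x) :
    MuDichotomyNormsE μ A Nrm ↔
      MuDichotomyNormsE η (QseqE A μ η) fun k => Nrm (idxQ μ η k) := by
  have hθ0 : (0:ℝ) ≤ θ := le_trans zero_le_one hθ
  have hθpos : (0:ℝ) < θ := lt_of_lt_of_le one_pos hθ
  have hμpos : ∀ n, 0 < μ n := growth_pos hμ
  have hηpos : ∀ n, 0 < η n := growth_pos hη
  have ratμ : ∀ n, μ (n + 1) ≤ θ * μ n := by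
    intro n; have h := hμr n; rw [div_le_iff₀ (hμpos n)] at h; linarith
  have ratη : ∀ n, η (n + 1) ≤ θ * η n := by
    intro n; have h := hηr n; rw [div_le_iff₀ (hηpos n)] at h; linarith
  have F1 : ∀ q, μ (idxQ μ η q) ≤ θ * η (q - 1) := by
    intro q
    have h1 : μ (floorInvTilde μ (η (q - 1)) + 1) ≤ θ * μ (floorInvTilde μ (η (q - 1))) :=
      ratμ _
    have h2 : μ (floorInvTilde μ (η (q - 1))) ≤ η (q - 1) :=
      floorInv_le hμ (growth_one_le hη _)
    calc μ (idxQ μ η q) = μ (floorInvTilde μ (η (q - 1)) + 1) := rfl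
      _ ≤ θ * μ (floorInvTilde μ (η (q - 1))) := h1
      _ ≤ θ * η (q - 1) := mul_le_mul_of_nonneg_left h2 hθ0
  have F2 : ∀ q, η (q - 1) < μ (idxQ μ η q) := fun q =>
    lt_floorInv_succ hμ (growth_one_le hη _)
  have F3 : ∀ q, 1 ≤ q → η q ≤ θ * η (q - 1) := by
    intro q hq
    have h := ratη (q - 1)
    rwa [show q - 1 + 1 = q by omega] at h
  have ημsub : ∀ q : ℕ, η (q - 1) ≤ η q := fun q => hη.1.monotone (Nat.sub_le q 1)
  have idx1 : ∀ k, 1 ≤ idxQ μ η k := fun k => Nat.le_add_left 1 _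
  have idxmono : ∀ p q : ℕ, p ≤ q → idxQ μ η p ≤ idxQ μ η q := by
    intro p q h
    have := floorInv_mono hμ (growth_one_le hη (p - 1))
      (hη.1.monotone (show p - 1 ≤ q - 1 by omega))
    unfold idxQ; omega
  have hμIk_le : ∀ q, μ (idxQ μ η q) ≤ θ * η q := fun q =>
    (F1 q).trans (mul_le_mul_of_nonneg_left (ημsub q) hθ0)
  have hη_le_μI : ∀ q, 1 ≤ q → η q ≤ θ * μ (idxQ μ η q) := fun q hq =>
    (F3 q hq).trans (mul_le_mul_of_nonneg_left (F2 q).le hθ0)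
  have crossF : ∀ p q : ℕ, 1 ≤ p →
      η p / η q ≤ (θ * θ) * (μ (idxQ μ η p) / μ (idxQ μ η q)) := fun p q hp =>
    div_cross (hηpos q) (hμpos _) (hηpos p).le (hη_le_μI p hp) (hμIk_le q)
  have ha0 : 0 ≤ a := ha.le
  constructor
  · rintro ⟨P, hP1, hP2, hP3, N, ν, hN, hν, hE1, hE2⟩
    have hN0 : (0:ℝ) ≤ N := le_trans zero_le_one hN
    have hν0 : 0 ≤ ν := hν.le
    have hΘν1 : (1:ℝ) ≤ (θ * θ) ^ ν := by
      rw [← Real.one_rpow ν]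
      exact Real.rpow_le_rpow zero_le_one (by nlinarith [mul_le_mul hθ hθ zero_le_one hθ0]) hν0
    have hNN1 : 1 ≤ N * (θ * θ) ^ ν := by
      nlinarith [mul_le_mul hN hΘν1 zero_le_one hN0]
    have hNN0 : 0 ≤ N * (θ * θ) ^ ν := by linarith
    have hcommA : ∀ k, 1 ≤ k → ∀ x : X, (A k) (P k x) = P (k + 1) ((A k) x) := by
      intro k hk x
      simpa using DFunLike.congr_fun (hP2 k hk) x
    have hLcA := evol_comm_proj A P hcommA
    refine ⟨fun k => P (idxQ μ η k), ?_, ?_, ?_, N * (θ * θ) ^ ν, ν, hNN1, hν, ?_, ?_⟩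
    · intro k _; exact hP1 _ (idx1 k)
    · intro k _
      ext x
      simp only [ContinuousLinearMap.comp_apply, ContinuousLinearEquiv.coe_coe]
      exact hLcA (idxQ μ η k) (idxQ μ η (k + 1)) (idx1 k)
        (idxmono k (k + 1) (Nat.le_succ k)) x
    · intro k _
      exact bijOn_of_comm (QseqE A μ η k) _ _
        (fun x => hLcA (idxQ μ η k) (idxQ μ η (k + 1)) (idx1 k)
          (idxmono k (k + 1) (Nat.le_succ k)) x)
    · intro k m hk hkm x
      have h1 := hE1 (idxQ μ η k) (idxQ μ η m) (idx1 k) (idxmono k m hkm) x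
      have hval : evolE (QseqE A μ η) m k ((P (idxQ μ η k)) x)
          = evolE A (idxQ μ η m) (idxQ μ η k) ((P (idxQ μ η k)) x) := by
        rw [evolE_apply, evolE_apply, evolQ_eq]
      have hc : 0 ≤ Nrm (idxQ μ η k) x := nrm_nonneg hNrm _ _
      have hcross := crossF m k (hk.trans hkm)
      have hR := rpow_ratio_bound (div_pos (hμpos _) (hμpos _))
        (div_pos (hηpos m) (hηpos k)) (mul_pos hθpos hθpos) hcross hν0
      show Nrm (idxQ μ η m) (evolE (QseqE A μ η) m k ((P (idxQ μ η k)) x))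
        ≤ N * (θ * θ) ^ ν * (η m / η k) ^ (-ν) * Nrm (idxQ μ η k) x
      rw [hval]
      calc Nrm (idxQ μ η m) (evolE A (idxQ μ η m) (idxQ μ η k) ((P (idxQ μ η k)) x))
          ≤ N * (μ (idxQ μ η m) / μ (idxQ μ η k)) ^ (-ν) * Nrm (idxQ μ η k) x := h1
        _ ≤ N * ((θ * θ) ^ ν * (η m / η k) ^ (-ν)) * Nrm (idxQ μ η k) x := by
            exact mul_le_mul_of_nonneg_right (mul_le_mul_of_nonneg_left hR hN0) hc
        _ = N * (θ * θ) ^ ν * (η m / η k) ^ (-ν) * Nrm (idxQ μ η k) x := by ring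
    · intro m k hm hmk x
      have h2 := hE2 (idxQ μ η m) (idxQ μ η k) (idx1 m) (idxmono m k hmk) x
      have hval : evolE (QseqE A μ η) m k (x - (P (idxQ μ η k)) x)
          = evolE A (idxQ μ η m) (idxQ μ η k) (x - (P (idxQ μ η k)) x) := by
        rw [evolE_apply, evolE_apply, evolQ_eq]
      have hc : 0 ≤ Nrm (idxQ μ η k) x := nrm_nonneg hNrm _ _
      have hcross := crossF k m (hm.trans hmk)
      have hR := rpow_ratio_bound (div_pos (hμpos _) (hμpos _))
        (div_pos (hηpos k) (hηpos m)) (mul_pos hθpos hθpos) hcross hν0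
      show Nrm (idxQ μ η m) (evolE (QseqE A μ η) m k (x - (P (idxQ μ η k)) x))
        ≤ N * (θ * θ) ^ ν * (η k / η m) ^ (-ν) * Nrm (idxQ μ η k) x
      rw [hval]
      calc Nrm (idxQ μ η m) (evolE A (idxQ μ η m) (idxQ μ η k) (x - (P (idxQ μ η k)) x))
          ≤ N * (μ (idxQ μ η k) / μ (idxQ μ η m)) ^ (-ν) * Nrm (idxQ μ η k) x := h2
        _ ≤ N * ((θ * θ) ^ ν * (η k / η m) ^ (-ν)) * Nrm (idxQ μ η k) x := by
            exact mul_le_mul_of_nonneg_right (mul_le_mul_of_nonneg_left hR hN0) hc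
        _ = N * (θ * θ) ^ ν * (η k / η m) ^ (-ν) * Nrm (idxQ μ η k) x := by ring
  · rintro ⟨P', hP1', hP2', hP3', N, ν, hN, hν, hE1', hE2'⟩
    have hN0 : (0:ℝ) ≤ N := le_trans zero_le_one hN
    have hν0 : 0 ≤ ν := hν.le
    have ex : ∀ m : ℕ, ∃ k : ℕ, 1 ≤ k ∧ m ≤ idxQ μ η k := by
      intro m
      rcases Filter.eventually_atTop.mp (hη.2.2.eventually_ge_atTop (μ m)) with ⟨c, hc⟩
      refine ⟨c + 1, Nat.le_add_left 1 c, ?_⟩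
      have h1 : μ m ≤ η (c + 1 - 1) := by simpa using hc c le_rfl
      have h2 : m ≤ floorInvTilde μ (η (c + 1 - 1)) :=
        le_csSup (floorSet_bddAbove hμ _) h1
      unfold idxQ; omega
    set km : ℕ → ℕ := fun m => Nat.find (ex m) with hkmdef
    have hkm1 : ∀ m, 1 ≤ km m := fun m => (Nat.find_spec (ex m)).1
    have hkm2 : ∀ m, m ≤ idxQ μ η (km m) := fun m => (Nat.find_spec (ex m)).2
    have hkmmono : ∀ p q : ℕ, p ≤ q → km p ≤ km q := fun p q h =>
      Nat.find_le ⟨(Nat.find_spec (ex q)).1, h.trans (Nat.find_spec (ex q)).2⟩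
    have hcommQ : ∀ k, 1 ≤ k → ∀ x : X,
        (QseqE A μ η k) (P' k x) = P' (k + 1) ((QseqE A μ η k) x) := by
      intro k hk x
      simpa using DFunLike.congr_fun (hP2' k hk) x
    have hLc : ∀ k k' : ℕ, 1 ≤ k → k ≤ k' → ∀ y : X,
        evolEquiv A (idxQ μ η k') (idxQ μ η k) (P' k y)
          = P' k' (evolEquiv A (idxQ μ η k') (idxQ μ η k) y) := by
      intro k k' hk hkk' y
      have h1 := evol_comm_proj (QseqE A μ η) P' hcommQ k k' hk hkk' y
      rwa [evolQ_eq, evolQ_eq] at h1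
    set P : ℕ → X →L[ℝ] X := fun m =>
      ((evolEquiv A m (idxQ μ η (km m)) : X →L[ℝ] X).comp
        ((P' (km m)).comp (evolEquiv A (idxQ μ η (km m)) m : X →L[ℝ] X))) with hPdef
    have hPapp : ∀ (m : ℕ) (x : X), P m x
        = evolEquiv A m (idxQ μ η (km m))
            (P' (km m) (evolEquiv A (idxQ μ η (km m)) m x)) := fun m x => rfl
    have hP'idem : ∀ k, 1 ≤ k → ∀ y : X, P' k (P' k y) = P' k y := by
      intro k hk y; simpa using DFunLike.congr_fun (hP1' k hk) y
    have hcommA : ∀ m, 1 ≤ m → ∀ x : X, (A m) (P m x) = P (m + 1) ((A m) x) := by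
      intro m hm x
      have hκκ' : km m ≤ km (m + 1) := hkmmono m (m + 1) (Nat.le_succ m)
      rw [hPapp, hPapp]
      calc (A m) (evolEquiv A m (idxQ μ η (km m))
              (P' (km m) (evolEquiv A (idxQ μ η (km m)) m x)))
          = evolEquiv A (m + 1) m (evolEquiv A m (idxQ μ η (km m))
              (P' (km m) (evolEquiv A (idxQ μ η (km m)) m x))) := (e_succ_apply A m _).symm
        _ = evolEquiv A (m + 1) (idxQ μ η (km m))
              (P' (km m) (evolEquiv A (idxQ μ η (km m)) m x)) := coc A (m + 1) m _ _
        _ = evolEquiv A (m + 1) (idxQ μ η (km (m + 1)))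
              (evolEquiv A (idxQ μ η (km (m + 1))) (idxQ μ η (km m))
                (P' (km m) (evolEquiv A (idxQ μ η (km m)) m x))) :=
            (coc A (m + 1) (idxQ μ η (km (m + 1))) (idxQ μ η (km m)) _).symm
        _ = evolEquiv A (m + 1) (idxQ μ η (km (m + 1)))
              (P' (km (m + 1)) (evolEquiv A (idxQ μ η (km (m + 1))) (idxQ μ η (km m))
                (evolEquiv A (idxQ μ η (km m)) m x))) := by
            rw [hLc (km m) (km (m + 1)) (hkm1 m) hκκ']
        _ = evolEquiv A (m + 1) (idxQ μ η (km (m + 1)))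
              (P' (km (m + 1)) (evolEquiv A (idxQ μ η (km (m + 1))) m x)) := by rw [coc]
        _ = evolEquiv A (m + 1) (idxQ μ η (km (m + 1)))
              (P' (km (m + 1)) (evolEquiv A (idxQ μ η (km (m + 1))) (m + 1)
                (evolEquiv A (m + 1) m x))) := by rw [coc]
        _ = evolEquiv A (m + 1) (idxQ μ η (km (m + 1)))
              (P' (km (m + 1)) (evolEquiv A (idxQ μ η (km (m + 1))) (m + 1) ((A m) x))) := by
            rw [e_succ_apply]
    have hIone : idxQ μ η 1 = 1 := by
      unfold idxQ
      rw [show (1:ℕ) - 1 = 0 from rfl, hη.2.1, floorInv_one hμ]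
    have hH1 : ∀ m, 1 ≤ m → μ (idxQ μ η (km m)) ≤ (θ * θ) * μ m := by
      intro m hm
      rcases eq_or_lt_of_le (hkm1 m) with h1 | h2
      · have e1 : idxQ μ η (km m) = 1 := by rw [← h1, hIone]
        have hm1 : m = 1 := by
          have := hkm2 m; rw [e1] at this; omega
        rw [e1, hm1]
        nlinarith [hμpos 1, mul_le_mul hθ hθ zero_le_one hθ0]
      · have hlt0 : km m - 1 < km m := Nat.sub_lt (by omega) Nat.one_pos
        have hmin : ¬(1 ≤ km m - 1 ∧ m ≤ idxQ μ η (km m - 1)) :=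
          Nat.find_min (ex m) hlt0
        have hlt : idxQ μ η (km m - 1) < m := by
          by_contra hcn
          push_neg at hcn
          exact hmin ⟨by omega, hcn⟩
        have s1 : μ (idxQ μ η (km m)) ≤ θ * η (km m - 1) := F1 _
        have s2 : η (km m - 1) ≤ θ * η (km m - 1 - 1) := by
          have h := ratη (km m - 2)
          rw [show km m - 2 + 1 = km m - 1 by omega] at h
          rwa [show km m - 1 - 1 = km m - 2 by omega]
        have s3 : η (km m - 1 - 1) < μ (idxQ μ η (km m - 1)) := F2 (km m - 1)
        have s4 : μ (idxQ μ η (km m - 1)) ≤ μ m := hμ.1.monotone hlt.le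
        nlinarith [mul_le_mul_of_nonneg_left s2 hθ0,
          mul_le_mul_of_nonneg_left s3.le (mul_nonneg hθ0 hθ0),
          mul_le_mul_of_nonneg_left s4 (mul_nonneg hθ0 hθ0)]
    have hH2 : ∀ m, 1 ≤ m → η (km m) ≤ (θ * (θ * θ)) * μ m := by
      intro m hm
      have s1 : η (km m) ≤ θ * η (km m - 1) := F3 (km m) (hkm1 m)
      have s2 : η (km m - 1) < μ (idxQ μ η (km m)) := F2 (km m)
      have s3 : μ (idxQ μ η (km m)) ≤ (θ * θ) * μ m := hH1 m hm
      nlinarith [mul_le_mul_of_nonneg_left s2.le hθ0, mul_le_mul_of_nonneg_left s3 hθ0]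
    have hH3 : ∀ m : ℕ, μ m ≤ θ * η (km m) := by
      intro m
      have s1 : μ m ≤ μ (idxQ μ η (km m)) := hμ.1.monotone (hkm2 m)
      have s2 : μ (idxQ μ η (km m)) ≤ θ * η (km m) := hμIk_le (km m)
      linarith
    have hθθ : (0:ℝ) < θ * θ := mul_pos hθpos hθpos
    have hΘ4 : (0:ℝ) < θ * (θ * (θ * θ)) := mul_pos hθpos (mul_pos hθpos hθθ)
    have hKT0 : (0:ℝ) ≤ K * (θ * θ) ^ a := mul_nonneg hK.le (Real.rpow_nonneg hθθ.le a)
    refine ⟨P, ?_, ?_, ?_,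
      max 1 (K * (θ * θ) ^ a * (K * (θ * θ) ^ a) * (N * (θ * (θ * (θ * θ))) ^ ν)), ν,
      le_max_left _ _, hν, ?_, ?_⟩
    · intro m hm
      ext x
      simp only [ContinuousLinearMap.comp_apply]
      rw [hPapp m x, hPapp m,
        coc A (idxQ μ η (km m)) m (idxQ μ η (km m)), e_self_apply,
        hP'idem (km m) (hkm1 m)]
    · intro m hm
      ext x
      simp only [ContinuousLinearMap.comp_apply, ContinuousLinearEquiv.coe_coe]
      exact hcommA m hm x
    · intro m hm
      exact bijOn_of_comm (A m) (P m) (P (m + 1)) (hcommA m hm)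
    · intro k m hk hkm x
      have hm1 : 1 ≤ m := hk.trans hkm
      have hκl : km k ≤ km m := hkmmono k m hkm
      have hvec : evolE A m k (P k x)
          = evolEquiv A m (idxQ μ η (km m))
              (P' (km m) (evolEquiv A (idxQ μ η (km m)) (idxQ μ η (km k))
                (evolEquiv A (idxQ μ η (km k)) k x))) := by
        rw [evolE_apply, hPapp, coc A m k (idxQ μ η (km k)),
          ← coc A m (idxQ μ η (km m)) (idxQ μ η (km k)),
          hLc (km k) (km m) (hkm1 k) hκl]
      have step1 := hbwd m (idxQ μ η (km m)) hm1 (hkm2 m)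
        (P' (km m) (evolEquiv A (idxQ μ η (km m)) (idxQ μ η (km k))
          (evolEquiv A (idxQ μ η (km k)) k x)))
      have step3 := hfwd k (idxQ μ η (km k)) hk (hkm2 k) x
      have step2 : Nrm (idxQ μ η (km m))
          (P' (km m) (evolEquiv A (idxQ μ η (km m)) (idxQ μ η (km k))
            (evolEquiv A (idxQ μ η (km k)) k x)))
          ≤ N * (η (km m) / η (km k)) ^ (-ν)
            * Nrm (idxQ μ η (km k)) (evolEquiv A (idxQ μ η (km k)) k x) := by
        have h := hE1' (km k) (km m) (hkm1 k) hκl (evolEquiv A (idxQ μ η (km k)) k x)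
        rw [show evolE (QseqE A μ η) (km m) (km k)
            (P' (km k) (evolEquiv A (idxQ μ η (km k)) k x))
            = P' (km m) (evolEquiv A (idxQ μ η (km m)) (idxQ μ η (km k))
              (evolEquiv A (idxQ μ η (km k)) k x)) from by
          rw [evolE_apply, evolQ_eq, hLc (km k) (km m) (hkm1 k) hκl]] at h
        exact h
      have hrat1 : (μ (idxQ μ η (km m)) / μ m) ^ a ≤ (θ * θ) ^ a :=
        Real.rpow_le_rpow (div_nonneg (hμpos _).le (hμpos _).le) (by rw [div_le_iff₀ (hμpos m)]; exact hH1 m hm1) ha0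
      have hrat2 : (μ (idxQ μ η (km k)) / μ k) ^ a ≤ (θ * θ) ^ a :=
        Real.rpow_le_rpow (div_nonneg (hμpos _).le (hμpos _).le) (by rw [div_le_iff₀ (hμpos k)]; exact hH1 k hk) ha0
      have hcross : μ m / μ k ≤ (θ * (θ * (θ * θ))) * (η (km m) / η (km k)) :=
        div_cross (hμpos k) (hηpos (km k)) (hμpos m).le (hH3 m) (hH2 k hk)
      have hR : (η (km m) / η (km k)) ^ (-ν)
          ≤ (θ * (θ * (θ * θ))) ^ ν * (μ m / μ k) ^ (-ν) :=
        rpow_ratio_bound (div_pos (hηpos (km m)) (hηpos (km k)))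
          (div_pos (hμpos m) (hμpos k)) hΘ4 hcross hν0
      have hc0 : 0 ≤ Nrm k x := nrm_nonneg hNrm _ _
      have hd1 : (0:ℝ) ≤ K * (μ (idxQ μ η (km m)) / μ m) ^ a :=
        mul_nonneg hK.le (Real.rpow_nonneg (div_nonneg (hμpos _).le (hμpos _).le) a)
      have hd2 : (0:ℝ) ≤ N * (η (km m) / η (km k)) ^ (-ν) :=
        mul_nonneg hN0 (Real.rpow_nonneg (div_nonneg (hηpos _).le (hηpos _).le) (-ν))
      have hd3 : (0:ℝ) ≤ K * (μ (idxQ μ η (km k)) / μ k) ^ a :=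
        mul_nonneg hK.le (Real.rpow_nonneg (div_nonneg (hμpos _).le (hμpos _).le) a)
      have hrp0 : (0:ℝ) ≤ (μ m / μ k) ^ (-ν) :=
        Real.rpow_nonneg (div_nonneg (hμpos _).le (hμpos _).le) (-ν)
      have hU'0 : (0:ℝ) ≤ N * ((θ * (θ * (θ * θ))) ^ ν * (μ m / μ k) ^ (-ν)) :=
        mul_nonneg hN0 (mul_nonneg (Real.rpow_nonneg hΘ4.le ν) hrp0)
      rw [show evolE A m k (P k x)
        = evolEquiv A m (idxQ μ η (km m))
            (P' (km m) (evolEquiv A (idxQ μ η (km m)) (idxQ μ η (km k))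
              (evolEquiv A (idxQ μ η (km k)) k x))) from hvec]
      calc Nrm m (evolEquiv A m (idxQ μ η (km m))
              (P' (km m) (evolEquiv A (idxQ μ η (km m)) (idxQ μ η (km k))
                (evolEquiv A (idxQ μ η (km k)) k x))))
          ≤ K * (μ (idxQ μ η (km m)) / μ m) ^ a
            * Nrm (idxQ μ η (km m)) (P' (km m)
              (evolEquiv A (idxQ μ η (km m)) (idxQ μ η (km k))
                (evolEquiv A (idxQ μ η (km k)) k x))) := step1
        _ ≤ K * (μ (idxQ μ η (km m)) / μ m) ^ a
            * (N * (η (km m) / η (km k)) ^ (-ν)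
              * Nrm (idxQ μ η (km k)) (evolEquiv A (idxQ μ η (km k)) k x)) :=
            mul_le_mul_of_nonneg_left step2 hd1
        _ ≤ K * (μ (idxQ μ η (km m)) / μ m) ^ a
            * (N * (η (km m) / η (km k)) ^ (-ν)
              * (K * (μ (idxQ μ η (km k)) / μ k) ^ a * Nrm k x)) :=
            mul_le_mul_of_nonneg_left
              (mul_le_mul_of_nonneg_left step3 hd2) hd1
        _ ≤ (K * (θ * θ) ^ a)
            * ((N * ((θ * (θ * (θ * θ))) ^ ν * (μ m / μ k) ^ (-ν)))
              * ((K * (θ * θ) ^ a) * Nrm k x)) :=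
            mul_chain4 (mul_le_mul_of_nonneg_left hrat1 hK.le)
              (mul_le_mul_of_nonneg_left hR hN0)
              (mul_le_mul_of_nonneg_left hrat2 hK.le)
              hd2 hd3 hc0 hKT0 hU'0 hKT0
        _ = (K * (θ * θ) ^ a * (K * (θ * θ) ^ a) * (N * (θ * (θ * (θ * θ))) ^ ν))
            * (μ m / μ k) ^ (-ν) * Nrm k x := by ring
        _ ≤ max 1 (K * (θ * θ) ^ a * (K * (θ * θ) ^ a) * (N * (θ * (θ * (θ * θ))) ^ ν))
            * (μ m / μ k) ^ (-ν) * Nrm k x := by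
            apply mul_le_mul_of_nonneg_right _ hc0
            exact mul_le_mul_of_nonneg_right (le_max_right _ _) hrp0
    · intro m k hm hmk x
      have hk1 : 1 ≤ k := hm.trans hmk
      have hρκ : km m ≤ km k := hkmmono m k hmk
      have hy : x - P k x = evolEquiv A k (idxQ μ η (km k))
          (evolEquiv A (idxQ μ η (km k)) k x
            - P' (km k) (evolEquiv A (idxQ μ η (km k)) k x)) := by
        rw [map_sub, coc A k (idxQ μ η (km k)) k, e_self_apply, ← hPapp]
      have hvec : evolE A m k (x - P k x)
          = evolEquiv A m (idxQ μ η (km m))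
              (evolEquiv A (idxQ μ η (km m)) (idxQ μ η (km k))
                (evolEquiv A (idxQ μ η (km k)) k x
                  - P' (km k) (evolEquiv A (idxQ μ η (km k)) k x))) := by
        rw [evolE_apply, hy, coc A m k (idxQ μ η (km k)),
          ← coc A m (idxQ μ η (km m)) (idxQ μ η (km k))]
      have step1 := hbwd m (idxQ μ η (km m)) hm (hkm2 m)
        (evolEquiv A (idxQ μ η (km m)) (idxQ μ η (km k))
          (evolEquiv A (idxQ μ η (km k)) k x
            - P' (km k) (evolEquiv A (idxQ μ η (km k)) k x)))
      have step3 := hfwd k (idxQ μ η (km k)) hk1 (hkm2 k) x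
      have step2 : Nrm (idxQ μ η (km m))
          (evolEquiv A (idxQ μ η (km m)) (idxQ μ η (km k))
            (evolEquiv A (idxQ μ η (km k)) k x
              - P' (km k) (evolEquiv A (idxQ μ η (km k)) k x)))
          ≤ N * (η (km k) / η (km m)) ^ (-ν)
            * Nrm (idxQ μ η (km k)) (evolEquiv A (idxQ μ η (km k)) k x) := by
        have h := hE2' (km m) (km k) (hkm1 m) hρκ (evolEquiv A (idxQ μ η (km k)) k x)
        rw [show evolE (QseqE A μ η) (km m) (km k)
            (evolEquiv A (idxQ μ η (km k)) k x
              - P' (km k) (evolEquiv A (idxQ μ η (km k)) k x))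
            = evolEquiv A (idxQ μ η (km m)) (idxQ μ η (km k))
              (evolEquiv A (idxQ μ η (km k)) k x
                - P' (km k) (evolEquiv A (idxQ μ η (km k)) k x)) from by
          rw [evolE_apply, evolQ_eq]] at h
        exact h
      have hrat1 : (μ (idxQ μ η (km m)) / μ m) ^ a ≤ (θ * θ) ^ a :=
        Real.rpow_le_rpow (div_nonneg (hμpos _).le (hμpos _).le) (by rw [div_le_iff₀ (hμpos m)]; exact hH1 m hm) ha0
      have hrat2 : (μ (idxQ μ η (km k)) / μ k) ^ a ≤ (θ * θ) ^ a :=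
        Real.rpow_le_rpow (div_nonneg (hμpos _).le (hμpos _).le) (by rw [div_le_iff₀ (hμpos k)]; exact hH1 k hk1) ha0
      have hcross : μ k / μ m ≤ (θ * (θ * (θ * θ))) * (η (km k) / η (km m)) :=
        div_cross (hμpos m) (hηpos (km m)) (hμpos k).le (hH3 k) (hH2 m hm)
      have hR : (η (km k) / η (km m)) ^ (-ν)
          ≤ (θ * (θ * (θ * θ))) ^ ν * (μ k / μ m) ^ (-ν) :=
        rpow_ratio_bound (div_pos (hηpos (km k)) (hηpos (km m)))
          (div_pos (hμpos k) (hμpos m)) hΘ4 hcross hν0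
      have hc0 : 0 ≤ Nrm k x := nrm_nonneg hNrm _ _
      have hd1 : (0:ℝ) ≤ K * (μ (idxQ μ η (km m)) / μ m) ^ a :=
        mul_nonneg hK.le (Real.rpow_nonneg (div_nonneg (hμpos _).le (hμpos _).le) a)
      have hd2 : (0:ℝ) ≤ N * (η (km k) / η (km m)) ^ (-ν) :=
        mul_nonneg hN0 (Real.rpow_nonneg (div_nonneg (hηpos _).le (hηpos _).le) (-ν))
      have hd3 : (0:ℝ) ≤ K * (μ (idxQ μ η (km k)) / μ k) ^ a :=
        mul_nonneg hK.le (Real.rpow_nonneg (div_nonneg (hμpos _).le (hμpos _).le) a)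
      have hrp0 : (0:ℝ) ≤ (μ k / μ m) ^ (-ν) :=
        Real.rpow_nonneg (div_nonneg (hμpos _).le (hμpos _).le) (-ν)
      have hU'0 : (0:ℝ) ≤ N * ((θ * (θ * (θ * θ))) ^ ν * (μ k / μ m) ^ (-ν)) :=
        mul_nonneg hN0 (mul_nonneg (Real.rpow_nonneg hΘ4.le ν) hrp0)
      rw [hvec]
      calc Nrm m (evolEquiv A m (idxQ μ η (km m))
              (evolEquiv A (idxQ μ η (km m)) (idxQ μ η (km k))
                (evolEquiv A (idxQ μ η (km k)) k x
                  - P' (km k) (evolEquiv A (idxQ μ η (km k)) k x))))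
          ≤ K * (μ (idxQ μ η (km m)) / μ m) ^ a
            * Nrm (idxQ μ η (km m)) (evolEquiv A (idxQ μ η (km m)) (idxQ μ η (km k))
              (evolEquiv A (idxQ μ η (km k)) k x
                - P' (km k) (evolEquiv A (idxQ μ η (km k)) k x))) := step1
        _ ≤ K * (μ (idxQ μ η (km m)) / μ m) ^ a
            * (N * (η (km k) / η (km m)) ^ (-ν)
              * Nrm (idxQ μ η (km k)) (evolEquiv A (idxQ μ η (km k)) k x)) :=
            mul_le_mul_of_nonneg_left step2 hd1
        _ ≤ K * (μ (idxQ μ η (km m)) / μ m) ^ a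
            * (N * (η (km k) / η (km m)) ^ (-ν)
              * (K * (μ (idxQ μ η (km k)) / μ k) ^ a * Nrm k x)) :=
            mul_le_mul_of_nonneg_left
              (mul_le_mul_of_nonneg_left step3 hd2) hd1
        _ ≤ (K * (θ * θ) ^ a)
            * ((N * ((θ * (θ * (θ * θ))) ^ ν * (μ k / μ m) ^ (-ν)))
              * ((K * (θ * θ) ^ a) * Nrm k x)) :=
            mul_chain4 (mul_le_mul_of_nonneg_left hrat1 hK.le)
              (mul_le_mul_of_nonneg_left hR hN0)
              (mul_le_mul_of_nonneg_left hrat2 hK.le)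
              hd2 hd3 hc0 hKT0 hU'0 hKT0
        _ = (K * (θ * θ) ^ a * (K * (θ * θ) ^ a) * (N * (θ * (θ * (θ * θ))) ^ ν))
            * (μ k / μ m) ^ (-ν) * Nrm k x := by ring
        _ ≤ max 1 (K * (θ * θ) ^ a * (K * (θ * θ) ^ a) * (N * (θ * (θ * (θ * θ))) ^ ν))
            * (μ k / μ m) ^ (-ν) * Nrm k x := by
            apply mul_le_mul_of_nonneg_right _ hc0
            exact mul_le_mul_of_nonneg_right (le_max_right _ _) hrp0

end
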